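/- arXiv:2106.00631 — 2 statements merged into one kernel-verified Lean document; each statement's English description precedes it below -/
import Mathlib

section
/- The set of minimal automorphisms of a spherically homogeneous rooted tree T is a single conjugacy class in Aut(T); in particular every minimal element of Aut(T) is conjugate to the standard odometer α_Σ. -/
/-- The boundary of the spherically homogeneous rooted tree with spherical
index `m`: infinite paths are sequences `x` with `x n ∈ {0, …, m n - 1}`. -/
abbrev Bd (m : ℕ → ℕ) : Type := ∀ n : ℕ, Fin (m n)

/-- A permutation of the boundary is a tree automorphism iff it preserves the
relation "agree on the first `N` coordinates" (i.e. it permutes each vertex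
level preserving the tree structure). -/
def IsTreeAut {m : ℕ → ℕ} (e : Equiv.Perm (Bd m)) : Prop :=
  ∀ (N : ℕ) (x y : Bd m), (∀ n < N, x n = y n) ↔ (∀ n < N, e x n = e y n)

/-- The automorphism group of the spherically homogeneous rooted tree with
spherical index `m`, realized as a subgroup of the permutations of the
boundary. -/
def treeAutGroup (m : ℕ → ℕ) : Subgroup (Equiv.Perm (Bd m)) where
  carrier := {e | IsTreeAut e}
  one_mem' := fun _ _ _ => Iff.rfl
  mul_mem' := by
    intro a b ha hb N x y
    exact (hb N x y).trans (ha N (b x) (b y))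
  inv_mem' := by
    intro a ha N x y
    have h := ha N (a⁻¹ x) (a⁻¹ y)
    simpa [Equiv.Perm.inv_def] using h.symm

/-- The orbit of `x` under the cyclic group generated by `a`. -/
def orbitZ {m : ℕ → ℕ} (a : Equiv.Perm (Bd m)) (x : Bd m) : Set (Bd m) :=
  {y | ∃ k : ℤ, (a ^ k) x = y}

/-- `a` acts transitively on every vertex level `V n` (vertices at level `n`
are identified with length-`n` prefixes of boundary points). -/
def LevelTransitive {m : ℕ → ℕ} (a : Equiv.Perm (Bd m)) : Prop :=
  ∀ (n : ℕ) (x y : Bd m), ∃ k : ℤ, ∀ i < n, ((a ^ k) x) i = y i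

/-- `f` belongs to the closure of the set `Γ` of tree automorphisms in the
profinite (= uniform) topology on `Aut(T)`: for every level `n` there is an
element of `Γ` agreeing with `f` up to level `n` everywhere. -/
def InClosure {m : ℕ → ℕ} (Γ : Set (Equiv.Perm (Bd m))) (f : Bd m → Bd m) : Prop :=
  ∀ n : ℕ, ∃ g ∈ Γ, ∀ x : Bd m, ∀ i < n, f x i = g x i

/-!
A tree automorphism `a` acting transitively on every level permutes the finite level `V_n` as a
single cycle, so `a ^ k x` agrees with `x` up to level `n` exactly when `|V_n|` divides `k`.
Hence for two minimal automorphisms `a`, `b` and base points `x₀`, `y₀`, the correspondence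
`a ^ k x₀ ↦ b ^ k y₀` respects agreement up to every level in both directions; as the orbits are
dense, it extends to a tree automorphism `w` with `w a = b w`.
-/

open MulAction

theorem Equiv.Perm.zpow_apply_eq_zpow_apply_iff_card_dvd {X : Type*} [Finite X]
    {σ : Equiv.Perm X} (hσ : ∀ u v, ∃ k : ℤ, (σ ^ k) u = v) (j j' : ℤ) (u : X) :
    (σ ^ j) u = (σ ^ j') u ↔ (Nat.card X : ℤ) ∣ j - j' := by
  have : Fintype X := Fintype.ofFinite X
  have horbit : orbit (Subgroup.zpowers σ) ((σ ^ j') u) = _root_.Set.univ := by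
    refine Set.eq_univ_of_forall fun v => ?_
    obtain ⟨k, rfl⟩ := hσ ((σ ^ j') u) v
    exact ⟨⟨σ ^ k, k, rfl⟩, rfl⟩
  have hperiod : Function.minimalPeriod (σ • ·) ((σ ^ j') u) = Nat.card X := by
    classical
    rw [minimalPeriod_eq_card, ← Nat.card_eq_fintype_card, horbit, Nat.card_univ]
  rw [← hperiod, ← zpow_smul_eq_iff_minimalPeriod_dvd, ← sub_add_cancel j j', zpow_add,
    Equiv.Perm.mul_apply, add_sub_cancel_right]
  rfl

section LevelAction

variable {m : ℕ → ℕ}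

def AgreeUpTo (n : ℕ) (x y : Bd m) : Prop := ∀ i < n, x i = y i

theorem AgreeUpTo.symm {n : ℕ} {x y : Bd m} (h : AgreeUpTo n x y) : AgreeUpTo n y x :=
  fun i hi => (h i hi).symm

theorem AgreeUpTo.trans {n : ℕ} {x y z : Bd m} (h : AgreeUpTo n x y) (h' : AgreeUpTo n y z) :
    AgreeUpTo n x z :=
  fun i hi => (h i hi).trans (h' i hi)

theorem AgreeUpTo.mono {n n' : ℕ} {x y : Bd m} (h : AgreeUpTo n x y) (hn : n' ≤ n) :
    AgreeUpTo n' x y :=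
  fun i hi => h i (hi.trans_le hn)

theorem eq_of_forall_agreeUpTo {x y : Bd m} (h : ∀ n, AgreeUpTo n x y) : x = y :=
  funext fun i => h (i + 1) i i.lt_succ_self

def levelSetoid (m : ℕ → ℕ) (n : ℕ) : Setoid (Bd m) where
  r := AgreeUpTo n
  iseqv := ⟨fun _ _ _ => rfl, AgreeUpTo.symm, AgreeUpTo.trans⟩

abbrev Level (m : ℕ → ℕ) (n : ℕ) : Type := Quotient (levelSetoid m n)

instance (n : ℕ) : Finite (Level m n) :=
  Finite.of_injective
    (Quotient.lift (fun x (i : Fin n) => x i) fun _ _ h => funext fun i => h i i.2)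
    (Quotient.ind₂ fun _ _ h => Quotient.sound fun i hi => congrFun h ⟨i, hi⟩)

def levelPerm (n : ℕ) : treeAutGroup m →* Equiv.Perm (Level m n) where
  toFun e := Quotient.congr e.1 (e.2 n)
  map_one' := Equiv.ext <| Quotient.ind fun _ => rfl
  map_mul' _ _ := Equiv.ext <| Quotient.ind fun _ => rfl

theorem levelPerm_zpow_mk (n : ℕ) (e : treeAutGroup m) (k : ℤ) (x : Bd m) :
    (levelPerm n e ^ k) ⟦x⟧ = ⟦((e : Equiv.Perm (Bd m)) ^ k) x⟧ := by
  rw [← map_zpow, ← Subgroup.coe_zpow]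
  rfl

theorem LevelTransitive.exists_levelPerm_zpow_eq {a : Equiv.Perm (Bd m)}
    (ha : a ∈ treeAutGroup m) (hA : LevelTransitive a) (n : ℕ) :
    ∀ u v : Level m n, ∃ k : ℤ, (levelPerm n ⟨a, ha⟩ ^ k) u = v := by
  refine Quotient.ind₂ fun x y => ?_
  obtain ⟨k, hk⟩ := hA n x y
  exact ⟨k, by rw [levelPerm_zpow_mk]; exact Quotient.sound hk⟩

theorem LevelTransitive.agreeUpTo_zpow_iff {a : Equiv.Perm (Bd m)} (ha : a ∈ treeAutGroup m)
    (hA : LevelTransitive a) (n : ℕ) (j j' : ℤ) (x : Bd m) :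
    AgreeUpTo n ((a ^ j) x) ((a ^ j') x) ↔ (Nat.card (Level m n) : ℤ) ∣ j - j' := by
  rw [← Equiv.Perm.zpow_apply_eq_zpow_apply_iff_card_dvd (hA.exists_levelPerm_zpow_eq ha n),
    levelPerm_zpow_mk, levelPerm_zpow_mk]
  exact (Quotient.eq (r := levelSetoid m n)).symm

theorem LevelTransitive.conj {a w : Equiv.Perm (Bd m)} (hw : w ∈ treeAutGroup m)
    (hA : LevelTransitive a) : LevelTransitive (w * a * w⁻¹) := by
  intro n x y
  obtain ⟨k, hk⟩ := hA n (w⁻¹ x) (w⁻¹ y)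
  refine ⟨k, ?_⟩
  rw [← MulAut.conj_apply, ← map_zpow, MulAut.conj_apply]
  simpa using (hw n _ _).mp hk

end LevelAction

section Conjugacy

variable {m : ℕ → ℕ} {a b : Equiv.Perm (Bd m)} {x₀ y₀ : Bd m}

def SameReturnTimes (a b : Equiv.Perm (Bd m)) (x₀ y₀ : Bd m) : Prop :=
  ∀ n (j j' : ℤ), AgreeUpTo n ((a ^ j) x₀) ((a ^ j') x₀) ↔ AgreeUpTo n ((b ^ j) y₀) ((b ^ j') y₀)

theorem SameReturnTimes.symm (h : SameReturnTimes a b x₀ y₀) : SameReturnTimes b a y₀ x₀ :=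
  fun n j j' => (h n j j').symm

theorem LevelTransitive.sameReturnTimes (ha : a ∈ treeAutGroup m) (hb : b ∈ treeAutGroup m)
    (hA : LevelTransitive a) (hB : LevelTransitive b) (x₀ y₀ : Bd m) :
    SameReturnTimes a b x₀ y₀ := by
  intro n j j'
  rw [hA.agreeUpTo_zpow_iff ha, hB.agreeUpTo_zpow_iff hb]

/-- The graph of the conjugator, which sends `a ^ k x₀` to `b ^ k y₀` and is extended to the
closure of the orbit by continuity. -/
def Corresponds (a b : Equiv.Perm (Bd m)) (x₀ y₀ x y : Bd m) : Prop :=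
  ∀ n (k : ℤ), AgreeUpTo n ((a ^ k) x₀) x → AgreeUpTo n ((b ^ k) y₀) y

theorem exists_corresponds (hA : LevelTransitive a) (hab : SameReturnTimes a b x₀ y₀)
    (x : Bd m) : ∃ y, Corresponds a b x₀ y₀ x y := by
  choose k hk using fun n => hA n x₀ x
  refine ⟨fun i => (b ^ k (i + 1)) y₀ i, fun n j hj i hi => ?_⟩
  have hji : AgreeUpTo (i + 1) ((a ^ j) x₀) ((a ^ k (i + 1)) x₀) :=
    (hj.mono hi).trans (AgreeUpTo.symm (hk (i + 1)))
  exact (hab _ _ _).mp hji i i.lt_succ_self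

theorem Corresponds.agreeUpTo {x x' y y' : Bd m} (hA : LevelTransitive a)
    (h : Corresponds a b x₀ y₀ x y) (h' : Corresponds a b x₀ y₀ x' y') {n : ℕ}
    (hx : AgreeUpTo n x x') : AgreeUpTo n y y' := by
  obtain ⟨k, hk⟩ := hA n x₀ x
  exact (h n k hk).symm.trans (h' n k (AgreeUpTo.trans hk hx))

theorem Corresponds.eq {x y y' : Bd m} (hA : LevelTransitive a)
    (h : Corresponds a b x₀ y₀ x y) (h' : Corresponds a b x₀ y₀ x y') : y = y' :=
  eq_of_forall_agreeUpTo fun _ => h.agreeUpTo hA h' fun _ _ => rfl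

theorem Corresponds.symm {x y : Bd m} (hA : LevelTransitive a)
    (hab : SameReturnTimes a b x₀ y₀) (h : Corresponds a b x₀ y₀ x y) :
    Corresponds b a y₀ x₀ y x := by
  intro n k hk
  obtain ⟨j, hj⟩ := hA n x₀ x
  exact ((hab n j k).mpr ((h n j hj).trans hk.symm)).symm.trans hj

theorem Corresponds.apply {x y : Bd m} (ha : a ∈ treeAutGroup m) (hb : b ∈ treeAutGroup m)
    (h : Corresponds a b x₀ y₀ x y) : Corresponds a b x₀ y₀ (a x) (b y) := by
  have zpow_eq {e : Equiv.Perm (Bd m)} (k : ℤ) (z : Bd m) : (e ^ k) z = e ((e ^ (k - 1)) z) := by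
    rw [← Equiv.Perm.mul_apply, ← zpow_one_add, add_sub_cancel]
  intro n k hk
  rw [zpow_eq] at hk ⊢
  exact (hb n _ _).mp (h n _ ((ha n _ _).mpr hk))

theorem exists_conj_eq_of_sameReturnTimes (ha : a ∈ treeAutGroup m) (hb : b ∈ treeAutGroup m)
    (hA : LevelTransitive a) (hB : LevelTransitive b) (hab : SameReturnTimes a b x₀ y₀) :
    ∃ w ∈ treeAutGroup m, w * a * w⁻¹ = b := by
  choose f hf using exists_corresponds hA hab
  choose g hg using exists_corresponds hB hab.symm
  let w : Equiv.Perm (Bd m) :=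
    { toFun := f
      invFun := g
      left_inv := fun x => ((hf x).symm hA hab).eq hB (hg (f x)) |>.symm
      right_inv := fun y => ((hg y).symm hB hab.symm).eq hA (hf (g y)) |>.symm }
  refine ⟨w, fun n x x' => ⟨(hf x).agreeUpTo hA (hf x'), ?_⟩, ?_⟩
  · exact ((hf x).symm hA hab).agreeUpTo hB ((hf x').symm hA hab)
  · rw [mul_inv_eq_iff_eq_mul]
    ext x : 1
    exact (hf (a x)).eq hA ((hf x).apply ha hb)

end Conjugacy

theorem settled_stmt6_general {m : ℕ → ℕ} :
    (∀ a w : Equiv.Perm (Bd m), a ∈ treeAutGroup m → w ∈ treeAutGroup m →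
      LevelTransitive a → LevelTransitive (w * a * w⁻¹)) ∧
    (∀ a b : Equiv.Perm (Bd m), a ∈ treeAutGroup m → b ∈ treeAutGroup m →
      LevelTransitive a → LevelTransitive b →
      ∃ w ∈ treeAutGroup m, w * a * w⁻¹ = b) := by
  refine ⟨fun a w _ hw hA => hA.conj hw, fun a b ha hb hA hB => ?_⟩
  rcases isEmpty_or_nonempty (Bd m) with _ | ⟨⟨x₀⟩⟩
  · exact ⟨1, one_mem _, Subsingleton.elim _ _⟩
  · exact exists_conj_eq_of_sameReturnTimes ha hb hA hB (hA.sameReturnTimes ha hb hB x₀ x₀)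

/-- The set of minimal automorphisms of a spherically homogeneous rooted tree
is a single conjugacy class in `Aut(T)`: every conjugate (in `Aut(T)`) of a
minimal element is minimal, and any two minimal elements of `Aut(T)` are
conjugate by an element of `Aut(T)`. In particular every minimal element is
conjugate to the odometer. -/
theorem settled_stmt6 {m : ℕ → ℕ} (hm : ∀ n, 2 ≤ m n) :
    (∀ a w : Equiv.Perm (Bd m), a ∈ treeAutGroup m → w ∈ treeAutGroup m →
      LevelTransitive a → LevelTransitive (w * a * w⁻¹)) ∧
    (∀ a b : Equiv.Perm (Bd m), a ∈ treeAutGroup m → b ∈ treeAutGroup m →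
      LevelTransitive a → LevelTransitive b →
      ∃ w ∈ treeAutGroup m, w * a * w⁻¹ = b) :=
  settled_stmt6_general
end

section
/- An automorphism h of a d-ary rooted tree T is settled if and only if h^k is settled for every nonzero integer k; the same equivalence holds with 'settled' replaced by 'strongly settled'. -/
variable {d : ℕ}

/-- The vertex `v` (identified with any boundary point passing through it)
lies in a cycle of length `k` of the restriction of `σ` to the level-`n`
vertices of the `d`-ary tree. -/
def InCycle (σ : Equiv.Perm (Bd (fun _ => d))) (n k : ℕ) (v : Bd (fun _ => d)) : Prop :=
  0 < k ∧ (∀ i < n, ((σ ^ k) v) i = v i) ∧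
    ∀ j, 0 < j → j < k → ¬ (∀ i < n, ((σ ^ j) v) i = v i)

/-- `x` passes through a level-`n` vertex lying above the cycle of the
level-`n` vertex of `v`. -/
def AboveCycle (σ : Equiv.Perm (Bd (fun _ => d))) (n : ℕ) (v x : Bd (fun _ => d)) : Prop :=
  ∃ j : ℕ, ∀ i < n, x i = ((σ ^ j) v) i

/-- The vertex of `v` at level `n` lies in a *stable* cycle of length `k` of
`σ`: it lies in a cycle of length `k`, and for every level `m > n` all the
vertices of level `m` lying above this cycle are in one single cycle of the
restriction of `σ` to level `m` (necessarily of length `d^(m-n) * k`). -/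
def InStableCycle (σ : Equiv.Perm (Bd (fun _ => d))) (n k : ℕ) (v : Bd (fun _ => d)) : Prop :=
  InCycle σ n k v ∧
    ∀ mlev, n < mlev → ∀ x y : Bd (fun _ => d), AboveCycle σ n v x → AboveCycle σ n v y →
      ∃ t : ℕ, ∀ i < mlev, ((σ ^ t) x) i = y i

/-- A level-`n` vertex `w` of the `d`-ary tree is in a stable cycle of `σ`. -/
def StableVertex (σ : Equiv.Perm (Bd (fun _ => d))) (n : ℕ) (w : Fin n → Fin d) : Prop :=
  ∃ v : Bd (fun _ => d), (∀ i : Fin n, v (i : ℕ) = w i) ∧ ∃ k : ℕ, InStableCycle σ n k v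

/-- `σ` is settled: the proportion of level-`n` vertices lying in stable
cycles of `σ` tends to `1` as `n → ∞`. -/
def SettledAut (σ : Equiv.Perm (Bd (fun _ => d))) : Prop :=
  Filter.Tendsto
    (fun n : ℕ => (Nat.card {w : Fin n → Fin d // StableVertex σ n w} : ℝ) /
      (Fintype.card (Fin n → Fin d) : ℝ))
    Filter.atTop (nhds 1)

/-- `σ` is strongly settled: from some level `n ≥ 1` on, every vertex lies in
a stable cycle of `σ`. -/
def StronglySettledAut (σ : Equiv.Perm (Bd (fun _ => d))) : Prop :=
  ∃ n : ℕ, 0 < n ∧ ∀ w : Fin n → Fin d, StableVertex σ n w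

/-- A minimal component of the dynamical system `(∂T, σ)`: a nonempty closed
`σ`-invariant set on which every `σ`-orbit is dense. -/
def IsMinimalComponent (σ : Equiv.Perm (Bd (fun _ => d))) (X : Set (Bd (fun _ => d))) : Prop :=
  X.Nonempty ∧ IsClosed X ∧ ⇑σ '' X = X ∧ ∀ x ∈ X, closure (orbitZ σ x) = X

namespace DAryTree

variable {d : ℕ}

def Agree (N : ℕ) (x y : Bd (fun _ => d)) : Prop := ∀ i < N, x i = y i

variable {N : ℕ} {x y z : Bd (fun _ => d)}

theorem Agree.refl (N : ℕ) (x : Bd (fun _ => d)) : Agree N x x := fun _ _ => rfl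

theorem Agree.symm (h : Agree N x y) : Agree N y x := fun i hi => (h i hi).symm

theorem Agree.trans (h : Agree N x y) (h' : Agree N y z) : Agree N x z :=
  fun i hi => (h i hi).trans (h' i hi)

theorem Agree.mono {M : ℕ} (hMN : M ≤ N) (h : Agree N x y) : Agree M x y :=
  fun i hi => h i (hi.trans_le hMN)

theorem agree_apply_iff {g : Equiv.Perm (Bd (fun _ => d))} (hg : g ∈ treeAutGroup (fun _ => d)) :
    Agree N (g x) (g y) ↔ Agree N x y :=
  (hg N x y).symm

theorem Agree.apply {g : Equiv.Perm (Bd (fun _ => d))} (hg : g ∈ treeAutGroup (fun _ => d))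
    (h : Agree N x y) : Agree N (g x) (g y) :=
  (agree_apply_iff hg).2 h

def vertexAt (N : ℕ) (x : Bd (fun _ => d)) : Fin N → Fin d := fun i => x i

theorem vertexAt_eq_iff : vertexAt N x = vertexAt N y ↔ Agree N x y :=
  ⟨fun h i hi => congrFun h ⟨i, hi⟩, fun h => funext fun i => h i i.isLt⟩

theorem exists_vertexAt_eq (y : Bd (fun _ => d)) (w : Fin N → Fin d) : ∃ x, vertexAt N x = w :=
  ⟨fun l => if hl : l < N then w ⟨l, hl⟩ else y l, funext fun i => dif_pos i.isLt⟩

def levelStabilizer (N : ℕ) (x : Bd (fun _ => d)) : Subgroup (Equiv.Perm (Bd (fun _ => d))) where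
  carrier := {g | g ∈ treeAutGroup (fun _ => d) ∧ Agree N (g x) x}
  one_mem' := ⟨one_mem _, Agree.refl N x⟩
  mul_mem' := fun ⟨hg, hgx⟩ ⟨hh, hhx⟩ => ⟨mul_mem hg hh, (hhx.apply hg).trans hgx⟩
  inv_mem' := fun {g} ⟨hg, hgx⟩ =>
    ⟨inv_mem hg, (agree_apply_iff hg).1 (by simpa using hgx.symm)⟩

theorem mem_levelStabilizer {g : Equiv.Perm (Bd (fun _ => d))}
    (hg : g ∈ treeAutGroup (fun _ => d)) : g ∈ levelStabilizer N x ↔ Agree N (g x) x :=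
  ⟨And.right, fun h => ⟨hg, h⟩⟩

end DAryTree

open DAryTree

theorem Fin.card_filter_castAdd {α : Type*} [Fintype α] {n r : ℕ} (P : (Fin n → α) → Prop)
    [DecidablePred P] :
    (Finset.univ.filter fun w : Fin (n + r) → α => P fun i => w (Fin.castAdd r i)).card =
      (Finset.univ.filter P).card * Fintype.card α ^ r := by
  rw [show Fintype.card α ^ r = (Finset.univ : Finset (Fin r → α)).card by simp,
    ← Finset.card_product]
  refine Finset.card_nbij' (fun w => (fun i => w (Fin.castAdd r i), fun i => w (Fin.natAdd n i)))
    (fun p => Fin.append p.1 p.2) ?_ ?_ ?_ ?_ <;> intro _ <;> simp [Fin.append_castAdd_natAdd]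

section Cycles

variable {d N n k : ℕ} {σ : Equiv.Perm (Bd (fun _ => d))} {x v : Bd (fun _ => d)}

theorem exists_pos_agree_pow (hσ : σ ∈ treeAutGroup (fun _ => d)) (N : ℕ) (x : Bd (fun _ => d)) :
    ∃ p, 0 < p ∧ Agree N ((σ ^ p) x) x := by
  obtain ⟨a, b, hab, h⟩ := Finite.exists_ne_map_eq_of_infinite fun t : ℕ => vertexAt N ((σ ^ t) x)
  wlog hlt : a < b generalizing a b
  · exact this b a hab.symm h.symm (by omega)
  refine ⟨b - a, by omega, ?_⟩
  have hb : (σ ^ a) ((σ ^ (b - a)) x) = (σ ^ b) x := by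
    rw [← Equiv.Perm.mul_apply, ← pow_add, Nat.add_sub_cancel' hlt.le]
  rw [← agree_apply_iff (pow_mem hσ a), hb]
  exact (vertexAt_eq_iff.1 h).symm

theorem exists_inCycle (hσ : σ ∈ treeAutGroup (fun _ => d)) (N : ℕ) (x : Bd (fun _ => d)) :
    ∃ k, InCycle σ N k x := by
  classical
  have h := exists_pos_agree_pow hσ N x
  exact ⟨Nat.find h, (Nat.find_spec h).1, (Nat.find_spec h).2,
    fun j hj hjk hag => Nat.find_min h hjk ⟨hj, hag⟩⟩

theorem InCycle.agree_zpow_self_iff (hσ : σ ∈ treeAutGroup (fun _ => d)) (hc : InCycle σ N k x)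
    (z : ℤ) : Agree N ((σ ^ z) x) x ↔ (k : ℤ) ∣ z := by
  have hk : σ ^ (k : ℤ) ∈ levelStabilizer N x :=
    (mem_levelStabilizer (zpow_mem hσ _)).2 (by rw [zpow_natCast]; exact hc.2.1)
  have hk0 : (0 : ℤ) < k := by exact_mod_cast hc.1
  rw [← mem_levelStabilizer (zpow_mem hσ z)]
  refine ⟨fun hz => ?_, fun ⟨q, hq⟩ => hq ▸ zpow_mul σ k q ▸ zpow_mem hk q⟩
  refine Int.dvd_of_emod_eq_zero ?_
  -- `σ ^ (z % k)` also fixes the vertex, so minimality of `k` forces `z % k = 0`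
  have hmod : σ ^ (z % k) ∈ levelStabilizer N x := by
    rw [Int.emod_def, sub_eq_add_neg, ← mul_neg, zpow_add, zpow_mul]
    exact mul_mem hz (zpow_mem hk _)
  have hr0 := Int.emod_nonneg z hk0.ne'
  have hrk := Int.emod_lt_of_pos z hk0
  generalize z % k = r at hmod hr0 hrk ⊢
  by_contra hr
  refine hc.2.2 r.toNat (by omega) (by omega) ?_
  rw [← zpow_natCast, Int.toNat_of_nonneg hr0]
  exact (mem_levelStabilizer (zpow_mem hσ r)).1 hmod

theorem InCycle.agree_zpow_iff (hσ : σ ∈ treeAutGroup (fun _ => d)) (hc : InCycle σ N k x)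
    (a b : ℤ) : Agree N ((σ ^ a) x) ((σ ^ b) x) ↔ (k : ℤ) ∣ a - b := by
  rw [← hc.agree_zpow_self_iff hσ, ← agree_apply_iff (zpow_mem hσ (-b)), ← Equiv.Perm.mul_apply,
    ← Equiv.Perm.mul_apply, ← zpow_add, ← zpow_add, neg_add_cancel, zpow_zero, neg_add_eq_sub]
  rfl

theorem InCycle.exists_pow_agree_zpow (hσ : σ ∈ treeAutGroup (fun _ => d))
    (hc : InCycle σ N k x) (z : ℤ) : ∃ t : ℕ, Agree N ((σ ^ t) x) ((σ ^ z) x) := by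
  have hk0 : (0 : ℤ) < k := by exact_mod_cast hc.1
  refine ⟨(z % k).toNat, ?_⟩
  rw [← zpow_natCast, Int.toNat_of_nonneg (Int.emod_nonneg z hk0.ne'), hc.agree_zpow_iff hσ]
  exact ⟨-(z / k), by rw [Int.emod_def]; ring⟩

theorem InCycle.agree_pow_mod (hσ : σ ∈ treeAutGroup (fun _ => d)) (hc : InCycle σ N k x)
    (t : ℕ) : Agree N ((σ ^ (t % k)) x) ((σ ^ t) x) := by
  have h := congrArg (Nat.cast : ℕ → ℤ) (Nat.mod_add_div t k)
  push_cast at h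
  simpa only [zpow_natCast] using
    (hc.agree_zpow_iff hσ (t % k : ℕ) t).2 ⟨-(t / k : ℕ), by push_cast; linear_combination h⟩

theorem InCycle.eq_of_agree (hσ : σ ∈ treeAutGroup (fun _ => d)) (hc : InCycle σ N k x)
    {t t' : ℕ} (ht : t < k) (ht' : t' < k) (h : Agree N ((σ ^ t) x) ((σ ^ t') x)) : t = t' := by
  have hdvd := (hc.agree_zpow_iff hσ t t').1 (by simpa only [zpow_natCast] using h)
  have := Int.eq_zero_of_abs_lt_dvd hdvd (by rw [abs_lt]; omega)
  omega

def levelCycle (σ : Equiv.Perm (Bd (fun _ => d))) (N k : ℕ) (x : Bd (fun _ => d)) :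
    Finset (Fin N → Fin d) :=
  (Finset.range k).image fun t => vertexAt N ((σ ^ t) x)

theorem InCycle.card_levelCycle (hσ : σ ∈ treeAutGroup (fun _ => d)) (hc : InCycle σ N k x) :
    (levelCycle σ N k x).card = k := by
  rw [levelCycle, Finset.card_image_of_injOn, Finset.card_range]
  intro t ht t' ht' h
  exact hc.eq_of_agree hσ (Finset.mem_range.1 ht) (Finset.mem_range.1 ht') (vertexAt_eq_iff.1 h)

theorem InCycle.mem_levelCycle_iff (hσ : σ ∈ treeAutGroup (fun _ => d)) (hc : InCycle σ N k x)
    {w : Fin N → Fin d} : w ∈ levelCycle σ N k x ↔ ∃ t : ℕ, vertexAt N ((σ ^ t) x) = w := by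
  refine ⟨fun hw => ?_, fun ⟨t, ht⟩ => ?_⟩
  · obtain ⟨t, -, ht⟩ := Finset.mem_image.1 hw
    exact ⟨t, ht⟩
  · refine Finset.mem_image.2 ⟨t % k, Finset.mem_range.2 (Nat.mod_lt _ hc.1), ?_⟩
    rw [← ht, vertexAt_eq_iff]
    exact hc.agree_pow_mod hσ t

theorem AboveCycle.of_agree {x' : Bd (fun _ => d)} (hx : AboveCycle σ n v x) (h : Agree n x' x) :
    AboveCycle σ n v x' :=
  let ⟨j, hj⟩ := hx
  ⟨j, h.trans hj⟩

theorem AboveCycle.zpow_apply (hσ : σ ∈ treeAutGroup (fun _ => d)) (hc : InCycle σ n k v)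
    (hx : AboveCycle σ n v x) (z : ℤ) : AboveCycle σ n v ((σ ^ z) x) := by
  obtain ⟨s, hs⟩ := hx
  obtain ⟨t, ht⟩ := hc.exists_pow_agree_zpow hσ (z + s)
  have hzs : Agree n ((σ ^ z) x) ((σ ^ (z + s)) v) := by
    rw [zpow_add, Equiv.Perm.mul_apply, zpow_natCast]
    exact Agree.apply (zpow_mem hσ z) hs
  exact ⟨t, hzs.trans ht.symm⟩

theorem InStableCycle.period_eq (hσ : σ ∈ treeAutGroup (fun _ => d)) (hs : InStableCycle σ n k v)
    (hx : AboveCycle σ n v x) {r p : ℕ} (hr : 0 < r) (hp : InCycle σ (n + r) p x) :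
    p = k * d ^ r := by
  classical
  -- by stability the orbit of the vertex of `x` is everything above the cycle: `k * d ^ r` vertices
  have horbit : levelCycle σ (n + r) p x = Finset.univ.filter
      fun w : Fin (n + r) → Fin d => (fun i => w (Fin.castAdd r i)) ∈ levelCycle σ n k v := by
    ext w
    rw [Finset.mem_filter, hp.mem_levelCycle_iff hσ, hs.1.mem_levelCycle_iff hσ]
    refine ⟨fun ⟨t, ht⟩ => ?_, fun ⟨_, i, hi⟩ => ?_⟩
    · have hxt := hx.zpow_apply hσ hs.1 t
      rw [zpow_natCast] at hxt
      obtain ⟨i, hi⟩ := hxt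
      exact ⟨Finset.mem_univ w, i, ht ▸ (vertexAt_eq_iff.2 hi).symm⟩
    · obtain ⟨y, rfl⟩ := exists_vertexAt_eq x w
      obtain ⟨t, ht⟩ := hs.2 (n + r) (by omega) x y hx ⟨i, (vertexAt_eq_iff.1 hi).symm⟩
      exact ⟨t, vertexAt_eq_iff.2 ht⟩
  rw [← hp.card_levelCycle hσ, horbit, Fin.card_filter_castAdd (· ∈ levelCycle σ n k v),
    Finset.filter_mem_eq_inter,
    Finset.univ_inter, hs.1.card_levelCycle hσ, Fintype.card_fin]

end Cycles

theorem Nat.dvd_pow_of_dvd_pow_of_le {c d a j : ℕ} (hc : c ≠ 0) (hca : c ∣ d ^ a) (hcj : c ≤ j) :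
    c ∣ d ^ j := by
  rcases eq_or_ne d 0 with rfl | hd
  · rw [zero_pow (by omega)]
    exact dvd_zero c
  rw [← Nat.factorization_le_iff_dvd hc (pow_ne_zero _ hd)] at hca ⊢
  intro p
  have hcap := hca p
  simp only [Nat.factorization_pow, Finsupp.smul_apply, smul_eq_mul] at hcap ⊢
  rcases eq_or_ne (d.factorization p) 0 with hp | hp
  · simpa [hp] using hcap
  · calc c.factorization p ≤ c := (Nat.factorization_lt p hc).le
      _ ≤ j := hcj
      _ ≤ j * d.factorization p := Nat.le_mul_of_pos_right j (Nat.pos_of_ne_zero hp)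

theorem Nat.gcd_mul_pow_dvd_mul_pow {j : ℕ} (hj : j ≠ 0) (k d a : ℕ) :
    Nat.gcd j (k * d ^ a) ∣ k * d ^ j := by
  obtain ⟨g₁, g₂, hg₁, hg₂, hg⟩ := exists_dvd_and_dvd_of_dvd_mul (Nat.gcd_dvd_right j (k * d ^ a))
  have hg₂j : g₂ ∣ j := (Dvd.intro_left g₁ hg.symm).trans (Nat.gcd_dvd_left j _)
  rw [hg]
  exact mul_dvd_mul hg₁ (Nat.dvd_pow_of_dvd_pow_of_le (ne_zero_of_dvd_ne_zero hj hg₂j) hg₂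
    (Nat.le_of_dvd (Nat.pos_of_ne_zero hj) hg₂j))

theorem exists_eq_mul_add_mul_pow_of_dvd_sub {j c : ℤ} (hj : j ≠ 0) {k d s : ℕ}
    (h : ((k * d ^ j.natAbs : ℕ) : ℤ) ∣ s - j * c) (r : ℕ) :
    ∃ T U : ℤ, (s : ℤ) = j * T + ((k * d ^ r : ℕ) : ℤ) * U := by
  refine Int.gcd_dvd_iff.1 (Int.natCast_dvd_natCast.1 ?_)
  have hg : (Int.gcd j (k * d ^ r : ℕ) : ℤ) ∣ ((k * d ^ j.natAbs : ℕ) : ℤ) :=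
    Int.natCast_dvd_natCast.2 (Nat.gcd_mul_pow_dvd_mul_pow (Int.natAbs_ne_zero.2 hj) k d r)
  have hgj := Int.gcd_dvd_left j (k * d ^ r : ℕ)
  simpa using dvd_add (hg.trans h) (hgj.mul_right c)

section Powers

variable {d n k : ℕ} {σ : Equiv.Perm (Bd (fun _ => d))} {x v : Bd (fun _ => d)}

theorem InStableCycle.exists_zpow (hσ : σ ∈ treeAutGroup (fun _ => d)) (hs : InStableCycle σ n k v)
    {j : ℤ} (hj : j ≠ 0) (hx : AboveCycle σ n v x) :
    ∃ k', InStableCycle (σ ^ j) (n + j.natAbs) k' x := by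
  have hσj := zpow_mem hσ j
  obtain ⟨k', hk'⟩ := exists_inCycle hσj (n + j.natAbs) x
  refine ⟨k', hk', fun m hm x' y' ⟨a, ha⟩ ⟨b, hb⟩ => ?_⟩
  obtain ⟨r, rfl⟩ : ∃ r, m = n + r := ⟨m - n, by omega⟩
  have ha' : Agree (n + j.natAbs) x' ((σ ^ (j * a)) x) := by rw [zpow_mul, zpow_natCast]; exact ha
  have hb' : Agree (n + j.natAbs) y' ((σ ^ (j * b)) x) := by rw [zpow_mul, zpow_natCast]; exact hb
  have hx' := (hx.zpow_apply hσ hs.1 _).of_agree (ha'.mono (by omega))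
  have hy' := (hx.zpow_apply hσ hs.1 _).of_agree (hb'.mono (by omega))
  -- `σ ^ s` takes `x'` to `y'` at level `n + r`; comparing with `σ ^ (j * (b - a))` at level
  -- `n + |j|`, where the period is `k * d ^ |j|`, shows that `s ∈ jℤ + (k * d ^ r)ℤ`
  obtain ⟨s, hsxy⟩ := hs.2 (n + r) (by omega) x' y' hx' hy'
  replace hsxy : Agree (n + r) ((σ ^ (s : ℤ)) x') y' := by rw [zpow_natCast]; exact hsxy
  obtain ⟨p, hp⟩ := exists_inCycle hσ (n + j.natAbs) x'
  obtain ⟨q, hq⟩ := exists_inCycle hσ (n + r) x'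
  rw [hs.period_eq hσ hx' (by omega) hp] at hp
  rw [hs.period_eq hσ hx' (by omega) hq] at hq
  have hjba : Agree (n + j.natAbs) ((σ ^ (j * (b - a))) x') y' := by
    have := ha'.apply (zpow_mem hσ (j * (b - a)))
    rw [← Equiv.Perm.mul_apply, ← zpow_add, show j * (b - a) + j * a = j * b by ring] at this
    exact this.trans hb'.symm
  have hsj : ((k * d ^ j.natAbs : ℕ) : ℤ) ∣ s - j * (b - a) :=
    (hp.agree_zpow_iff hσ _ _).1 ((hsxy.mono (by omega)).trans hjba.symm)
  obtain ⟨T, U, hTU⟩ := exists_eq_mul_add_mul_pow_of_dvd_sub hj hsj r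
  have hT : Agree (n + r) (((σ ^ j) ^ T) x') y' := by
    rw [← zpow_mul]
    exact ((hq.agree_zpow_iff hσ _ s).2 ⟨-U, by linear_combination -hTU⟩).trans hsxy
  obtain ⟨c, hc⟩ := exists_inCycle hσj (n + r) x'
  obtain ⟨t, ht⟩ := hc.exists_pow_agree_zpow hσj T
  exact ⟨t, ht.trans hT⟩

theorem StableVertex.zpow_of_castAdd (hσ : σ ∈ treeAutGroup (fun _ => d)) {j : ℤ} (hj : j ≠ 0)
    {w : Fin (n + j.natAbs) → Fin d} (hw : StableVertex σ n fun i => w (Fin.castAdd _ i)) :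
    StableVertex (σ ^ j) (n + j.natAbs) w := by
  obtain ⟨v, hv, k, hk⟩ := hw
  obtain ⟨x, rfl⟩ := exists_vertexAt_eq v w
  obtain ⟨k', hk'⟩ := hk.exists_zpow hσ hj ⟨0, fun i hi => by simpa [vertexAt] using (hv ⟨i, hi⟩).symm⟩
  exact ⟨x, fun _ => rfl, k', hk'⟩

theorem StronglySettledAut.zpow (hσ : σ ∈ treeAutGroup (fun _ => d)) {j : ℤ} (hj : j ≠ 0)
    (h : StronglySettledAut σ) : StronglySettledAut (σ ^ j) := by
  obtain ⟨n, hn, hall⟩ := h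
  exact ⟨n + j.natAbs, by omega, fun w => StableVertex.zpow_of_castAdd hσ hj (hall _)⟩

theorem card_stableVertex_mul_le (hσ : σ ∈ treeAutGroup (fun _ => d)) {j : ℤ} (hj : j ≠ 0)
    (n : ℕ) : Nat.card {w : Fin n → Fin d // StableVertex σ n w} * d ^ j.natAbs ≤
      Nat.card {w : Fin (n + j.natAbs) → Fin d // StableVertex (σ ^ j) (n + j.natAbs) w} := by
  classical
  simp only [Nat.card_eq_fintype_card, Fintype.card_subtype]
  have hext := Fin.card_filter_castAdd (r := j.natAbs) (StableVertex σ n)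
  rw [Fintype.card_fin] at hext
  rw [← hext]
  exact Finset.card_le_card fun w hw => by
    simpa using StableVertex.zpow_of_castAdd hσ hj (Finset.mem_filter.1 hw).2

noncomputable def stableProportion (σ : Equiv.Perm (Bd (fun _ => d))) (n : ℕ) : ℝ :=
  (Nat.card {w : Fin n → Fin d // StableVertex σ n w} : ℝ) / (Fintype.card (Fin n → Fin d) : ℝ)

theorem stableProportion_le_one (σ : Equiv.Perm (Bd (fun _ => d))) (n : ℕ) :
    stableProportion σ n ≤ 1 :=
  div_le_one_of_le₀ (by exact_mod_cast Nat.card_eq_fintype_card (α := Fin n → Fin d) ▸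
    Finite.card_subtype_le _) (Nat.cast_nonneg _)

theorem stableProportion_le_zpow (hd : 0 < d) (hσ : σ ∈ treeAutGroup (fun _ => d)) {j : ℤ}
    (hj : j ≠ 0) (n : ℕ) : stableProportion σ n ≤ stableProportion (σ ^ j) (n + j.natAbs) := by
  have hcard : (Nat.card {w : Fin n → Fin d // StableVertex σ n w} : ℝ) * (d : ℝ) ^ j.natAbs ≤
      Nat.card {w : Fin (n + j.natAbs) → Fin d // StableVertex (σ ^ j) (n + j.natAbs) w} := by
    exact_mod_cast card_stableVertex_mul_le hσ hj n
  simp only [stableProportion, Fintype.card_fun, Fintype.card_fin, Nat.cast_mul, Nat.cast_pow, pow_add]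
  rw [← mul_div_mul_right _ _ (pow_ne_zero j.natAbs (Nat.cast_ne_zero.2 hd.ne'))]
  gcongr

theorem SettledAut.zpow (hd : 0 < d) (hσ : σ ∈ treeAutGroup (fun _ => d)) {j : ℤ} (hj : j ≠ 0)
    (h : SettledAut σ) : SettledAut (σ ^ j) :=
  (Filter.tendsto_add_atTop_iff_nat (f := stableProportion (σ ^ j)) j.natAbs).1 <|
    tendsto_of_tendsto_of_tendsto_of_le_of_le h tendsto_const_nhds
      (stableProportion_le_zpow hd hσ hj) fun _ => stableProportion_le_one _ _

end Powers

/-- An automorphism `h` of the `d`-ary rooted tree is settled if and only if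
`h ^ k` is settled for every nonzero integer `k`; and likewise with "settled"
replaced by "strongly settled". -/
theorem settled_stmt17 (d : ℕ) (hd : 2 ≤ d)
    (h : Equiv.Perm (Bd (fun _ => d))) (hh : h ∈ treeAutGroup (fun _ => d)) :
    (SettledAut h ↔ ∀ k : ℤ, k ≠ 0 → SettledAut (h ^ k)) ∧
    (StronglySettledAut h ↔ ∀ k : ℤ, k ≠ 0 → StronglySettledAut (h ^ k)) :=
  ⟨⟨fun hs _ hk => hs.zpow (by omega) hh hk, fun H => by simpa using H 1 one_ne_zero⟩,
    ⟨fun hs _ hk => hs.zpow hh hk, fun H => by simpa using H 1 one_ne_zero⟩⟩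
end
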